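/- Polynomial solutions of H₆: let e ∈ ℂ⁹, u ∈ ℂ and m ∈ ℕ. If e₇ = −m, or e₈ = −m, or e₉ = −m, or s = −m, then there exists a nonzero polynomial f ∈ ℂ[x] with deg f ≤ m and H₆(e,u)(f) = 0. -/
import Mathlib


open Polynomial

noncomputable section

abbrev EndP := Module.End ℂ (Polynomial ℂ)

/-- The formal derivative `∂` as a linear endomorphism of `ℂ[x]`. -/
def D : EndP := Polynomial.derivative

/-- Multiplication by the polynomial `p` as a linear endomorphism of `ℂ[x]`. -/
def M (p : Polynomial ℂ) : EndP := LinearMap.mulLeft ℂ p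

/-- The Euler operator `θ = x·∂`. -/
def θop : EndP := M X * D

/-- `s = (6 − e₁ − ⋯ − e₉)/3`. -/
def sC (e1 e2 e3 e4 e5 e6 e7 e8 e9 : ℂ) : ℂ :=
  (6 - e1 - e2 - e3 - e4 - e5 - e6 - e7 - e8 - e9) / 3

def T12C (e1 e2 e3 _e4 _e5 _e6 e7 e8 e9 : ℂ) : ℂ :=
  (e1 + e2 + e3) - 2 * (e7 + e8 + e9) - 9

def T11C (e1 e2 e3 e4 e5 e6 e7 e8 e9 : ℂ) : ℂ :=
  let s11 := e1 + e2 + e3;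
  let s12 := e4 + e5 + e6;
  let s13 := e7 + e8 + e9;
  let s21 := e1*e2 + e1*e3 + e2*e3;
  let s22 := e4*e5 + e4*e6 + e5*e6;
  let s23 := e7*e8 + e7*e9 + e8*e9;
  -8 + (s11^2 + 2*s11*s13 - s12^2 + s13^2)/3 + s11 - 5*s13 - s21 + s22 - 2*s23

def T22C (e1 e2 e3 _e4 _e5 _e6 e7 e8 e9 : ℂ) : ℂ :=
  -2 * (e1 + e2 + e3) + (e7 + e8 + e9) + 18

def T21C (e1 e2 e3 e4 e5 e6 e7 e8 e9 : ℂ) : ℂ :=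
  let s11 := e1 + e2 + e3;
  let s12 := e4 + e5 + e6;
  let s13 := e7 + e8 + e9;
  let s21 := e1*e2 + e1*e3 + e2*e3;
  let s22 := e4*e5 + e4*e6 + e5*e6;
  let s23 := e7*e8 + e7*e9 + e8*e9;
  35 + (-s11^2 - 2*s11*s13 + s12^2 - s13^2)/3 - 7*s11 + 5*s13 + 2*s21 - s22 + s23

def T20C (e1 e2 e3 e4 e5 e6 e7 e8 e9 u : ℂ) : ℂ :=
  let s11 := e1 + e2 + e3;
  let s12 := e4 + e5 + e6;
  let s13 := e7 + e8 + e9;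
  let s21 := e1*e2 + e1*e3 + e2*e3;
  let s22 := e4*e5 + e4*e6 + e5*e6;
  let s31 := e1*e2*e3;
  let s32 := e4*e5*e6;
  let s33 := e7*e8*e9;
  -u + 19 + (s11^2*s13 - s11*s12^2 + s11*s13^2 - s12^2*s13)/9
    + (s13^3 + s11^3 - 2*s12^3)/27
    + (-2*s11^2 - 4*s11*s13 + s11*s22 + 2*s12^2 + s22*s12 - 2*s13^2 + s22*s13)/3
    - 5*s11 + 4*s13 + 3*s21 - 2*s22 - s31 - s32 - s33

/-- `B₀(t) = (t+e₇)(t+e₈)(t+e₉)`. -/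
def B0op (e7 e8 e9 : ℂ) (t : EndP) : EndP :=
  (t + e7 • 1) * (t + e8 • 1) * (t + e9 • 1)

/-- `B₁(t) = −3t³ + T₁₂t² + T₁₁t + u`. -/
def B1op (e1 e2 e3 e4 e5 e6 e7 e8 e9 u : ℂ) (t : EndP) : EndP :=
  (-3 : ℂ) • t ^ 3 + (T12C e1 e2 e3 e4 e5 e6 e7 e8 e9) • t ^ 2
    + (T11C e1 e2 e3 e4 e5 e6 e7 e8 e9) • t + u • 1

/-- `B₂(t) = 3t³ + T₂₂t² + T₂₁t + T₂₀`. -/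
def B2op (e1 e2 e3 e4 e5 e6 e7 e8 e9 u : ℂ) (t : EndP) : EndP :=
  (3 : ℂ) • t ^ 3 + (T22C e1 e2 e3 e4 e5 e6 e7 e8 e9) • t ^ 2
    + (T21C e1 e2 e3 e4 e5 e6 e7 e8 e9) • t + (T20C e1 e2 e3 e4 e5 e6 e7 e8 e9 u) • 1

/-- `T₃(t) = −(t+3−e₁)(t+3−e₂)(t+3−e₃)`. -/
def T3op (e1 e2 e3 : ℂ) (t : EndP) : EndP :=
  -((t + (3 - e1) • 1) * (t + (3 - e2) • 1) * (t + (3 - e3) • 1))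

/-- The operator `H₆(e,u)`. -/
def H6op (e1 e2 e3 e4 e5 e6 e7 e8 e9 u : ℂ) : EndP :=
  let s := sC e1 e2 e3 e4 e5 e6 e7 e8 e9;
  (θop + (s + 2) • 1) * (θop + (s + 1) • 1) * (θop + s • 1) * B0op e7 e8 e9 θop
    + (θop + (s + 2) • 1) * (θop + (s + 1) • 1) * B1op e1 e2 e3 e4 e5 e6 e7 e8 e9 u θop * D
    + (θop + (s + 2) • 1) * B2op e1 e2 e3 e4 e5 e6 e7 e8 e9 u θop * D ^ 2
    + T3op e1 e2 e3 θop * D ^ 3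


section Aux

lemma theta_apply (p : Polynomial ℂ) : θop p = X * derivative p := rfl

lemma coeff_D (p : Polynomial ℂ) (k : ℕ) : (D p).coeff k = (k + 1 : ℂ) * p.coeff (k+1) := by
  show (derivative p).coeff k = _
  rw [coeff_derivative]; ring

lemma coeff_theta (p : Polynomial ℂ) (k : ℕ) : (θop p).coeff k = (k : ℂ) * p.coeff k := by
  rw [theta_apply]
  cases k with
  | zero => simp
  | succ n => rw [coeff_X_mul, coeff_derivative]; push_cast; ring

lemma coeff_theta_add (c : ℂ) (p : Polynomial ℂ) (k : ℕ) :
    ((θop + c • (1 : EndP)) p).coeff k = ((k : ℂ) + c) * p.coeff k := by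
  simp only [LinearMap.add_apply, LinearMap.smul_apply, Module.End.one_apply,
    coeff_add, coeff_smul, coeff_theta, smul_eq_mul]
  ring

lemma mem_lt_iff {n : ℕ} {p : Polynomial ℂ} :
    p ∈ degreeLT ℂ n ↔ ∀ k, n ≤ k → p.coeff k = 0 := by
  rw [mem_degreeLT]; exact degree_lt_iff_coeff_zero p n

lemma theta_mem {n : ℕ} {p : Polynomial ℂ} (hp : p ∈ degreeLT ℂ n) : θop p ∈ degreeLT ℂ n := by
  rw [mem_lt_iff] at hp ⊢
  intro k hk; rw [coeff_theta, hp k hk, mul_zero]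

lemma theta_add_mem {n : ℕ} (c : ℂ) {p : Polynomial ℂ} (hp : p ∈ degreeLT ℂ n) :
    (θop + c • (1 : EndP)) p ∈ degreeLT ℂ n := by
  rw [mem_lt_iff] at hp ⊢
  intro k hk; rw [coeff_theta_add, hp k hk, mul_zero]

lemma D_mem {n : ℕ} {p : Polynomial ℂ} (hp : p ∈ degreeLT ℂ n) : D p ∈ degreeLT ℂ n := by
  rw [mem_lt_iff] at hp ⊢
  intro k hk; rw [coeff_D, hp (k+1) (le_trans hk (Nat.le_succ k)), mul_zero]

lemma D_mem_drop {n : ℕ} {p : Polynomial ℂ} (hp : p ∈ degreeLT ℂ (n+1)) :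
    D p ∈ degreeLT ℂ n := by
  rw [mem_lt_iff] at hp ⊢
  intro k hk; rw [coeff_D, hp (k+1) (Nat.succ_le_succ hk), mul_zero]

lemma theta_pow_mem {n j : ℕ} {p : Polynomial ℂ} (hp : p ∈ degreeLT ℂ n) :
    (θop ^ j) p ∈ degreeLT ℂ n := by
  induction j generalizing p with
  | zero => simpa using hp
  | succ i ih =>
    rw [pow_succ, Module.End.mul_apply]
    exact ih (theta_mem hp)

lemma B1_mem {n : ℕ} (e1 e2 e3 e4 e5 e6 e7 e8 e9 u : ℂ) {p : Polynomial ℂ}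
    (hp : p ∈ degreeLT ℂ n) :
    B1op e1 e2 e3 e4 e5 e6 e7 e8 e9 u θop p ∈ degreeLT ℂ n := by
  unfold B1op
  simp only [LinearMap.add_apply, LinearMap.smul_apply, Module.End.one_apply]
  exact Submodule.add_mem _ (Submodule.add_mem _ (Submodule.add_mem _
    (Submodule.smul_mem _ _ (theta_pow_mem hp)) (Submodule.smul_mem _ _ (theta_pow_mem hp)))
    (Submodule.smul_mem _ _ (theta_mem hp))) (Submodule.smul_mem _ _ hp)

lemma B2_mem {n : ℕ} (e1 e2 e3 e4 e5 e6 e7 e8 e9 u : ℂ) {p : Polynomial ℂ}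
    (hp : p ∈ degreeLT ℂ n) :
    B2op e1 e2 e3 e4 e5 e6 e7 e8 e9 u θop p ∈ degreeLT ℂ n := by
  unfold B2op
  simp only [LinearMap.add_apply, LinearMap.smul_apply, Module.End.one_apply]
  exact Submodule.add_mem _ (Submodule.add_mem _ (Submodule.add_mem _
    (Submodule.smul_mem _ _ (theta_pow_mem hp)) (Submodule.smul_mem _ _ (theta_pow_mem hp)))
    (Submodule.smul_mem _ _ (theta_mem hp))) (Submodule.smul_mem _ _ hp)

lemma T3_mem {n : ℕ} (e1 e2 e3 : ℂ) {p : Polynomial ℂ} (hp : p ∈ degreeLT ℂ n) :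
    T3op e1 e2 e3 θop p ∈ degreeLT ℂ n := by
  unfold T3op
  simp only [LinearMap.neg_apply, Module.End.mul_apply]
  exact Submodule.neg_mem _ (theta_add_mem _ (theta_add_mem _ (theta_add_mem _ hp)))

lemma H6_maps (e1 e2 e3 e4 e5 e6 e7 e8 e9 u : ℂ) (m : ℕ)
    (h : e7 = -(m : ℂ) ∨ e8 = -(m : ℂ) ∨ e9 = -(m : ℂ)
      ∨ sC e1 e2 e3 e4 e5 e6 e7 e8 e9 = -(m : ℂ))
    {p : Polynomial ℂ} (hp : p ∈ degreeLT ℂ (m+1)) :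
    H6op e1 e2 e3 e4 e5 e6 e7 e8 e9 u p ∈ degreeLT ℂ m := by
  set s := sC e1 e2 e3 e4 e5 e6 e7 e8 e9 with hs
  have hDp : D p ∈ degreeLT ℂ m := D_mem_drop hp
  have hD2p : (D ^ 2 : EndP) p ∈ degreeLT ℂ m := by
    rw [pow_two, Module.End.mul_apply]; exact D_mem hDp
  have hD3p : (D ^ 3 : EndP) p ∈ degreeLT ℂ m := by
    rw [pow_succ, Module.End.mul_apply]
    rw [pow_two, Module.End.mul_apply]
    exact D_mem (D_mem hDp)
  have h2 : ((θop + (s + 2) • 1) * (θop + (s + 1) • 1)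
      * B1op e1 e2 e3 e4 e5 e6 e7 e8 e9 u θop * D) p ∈ degreeLT ℂ m := by
    simp only [Module.End.mul_apply]
    exact theta_add_mem _ (theta_add_mem _ (B1_mem _ _ _ _ _ _ _ _ _ _ hDp))
  have h3 : (((θop + (s + 2) • 1)
      * B2op e1 e2 e3 e4 e5 e6 e7 e8 e9 u θop * D ^ 2 : EndP)) p ∈ degreeLT ℂ m := by
    simp only [Module.End.mul_apply]
    exact theta_add_mem _ (B2_mem _ _ _ _ _ _ _ _ _ _ hD2p)
  have h4 : (T3op e1 e2 e3 θop * D ^ 3) p ∈ degreeLT ℂ m := by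
    rw [Module.End.mul_apply]
    exact T3_mem _ _ _ hD3p
  have h1 : ((θop + (s + 2) • 1) * (θop + (s + 1) • 1) * (θop + s • 1)
      * B0op e7 e8 e9 θop) p ∈ degreeLT ℂ m := by
    rw [mem_lt_iff]
    intro k hk
    unfold B0op
    simp only [Module.End.mul_apply]
    rw [coeff_theta_add, coeff_theta_add, coeff_theta_add, coeff_theta_add,
      coeff_theta_add, coeff_theta_add]
    rcases Nat.lt_or_ge k (m+1) with hkm | hkm
    · have hkm' : k = m := le_antisymm (Nat.lt_succ_iff.mp hkm) hk
      subst hkm'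
      rcases h with h7 | h8 | h9 | hS
      · rw [h7]; ring
      · rw [h8]; ring
      · rw [h9]; ring
      · rw [hS]; ring
    · rw [mem_lt_iff.mp hp k hkm]; ring
  unfold H6op
  simp only [LinearMap.add_apply]
  exact Submodule.add_mem _ (Submodule.add_mem _ (Submodule.add_mem _ h1 h2) h3) h4

instance degreeLT_fd (n : ℕ) : FiniteDimensional ℂ (degreeLT ℂ n) :=
  Module.Finite.equiv (degreeLTEquiv ℂ n).symm

lemma finrank_degreeLT' (n : ℕ) : Module.finrank ℂ (degreeLT ℂ n) = n := by
  rw [(degreeLTEquiv ℂ n).finrank_eq]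
  simp

end Aux

/-- Polynomial solutions of `H₆`: if `e₇`, `e₈`, `e₉` or `s` equals `−m` for some `m ∈ ℕ`,
then `H₆(e,u)` kills a nonzero polynomial of degree at most `m`. -/
theorem H6_polynomial_solution (e1 e2 e3 e4 e5 e6 e7 e8 e9 u : ℂ) (m : ℕ)
    (h : e7 = -(m : ℂ) ∨ e8 = -(m : ℂ) ∨ e9 = -(m : ℂ)
      ∨ sC e1 e2 e3 e4 e5 e6 e7 e8 e9 = -(m : ℂ)) :
    ∃ f : Polynomial ℂ, f ≠ 0 ∧ f.natDegree ≤ m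
      ∧ H6op e1 e2 e3 e4 e5 e6 e7 e8 e9 u f = 0 := by
  set H := H6op e1 e2 e3 e4 e5 e6 e7 e8 e9 u with hH
  have hmaps : ∀ x ∈ degreeLT ℂ (m+1), H x ∈ degreeLT ℂ m :=
    fun x hx => H6_maps e1 e2 e3 e4 e5 e6 e7 e8 e9 u m h hx
  set L : degreeLT ℂ (m+1) →ₗ[ℂ] degreeLT ℂ m := H.restrict hmaps with hL
  have hker : LinearMap.ker L ≠ ⊥ := by
    intro hbot
    have hinj : Function.Injective L := LinearMap.ker_eq_bot.mp hbot
    have hle := LinearMap.finrank_le_finrank_of_injective hinj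
    rw [finrank_degreeLT', finrank_degreeLT'] at hle
    omega
  obtain ⟨x, hxker, hxne⟩ := Submodule.exists_mem_ne_zero_of_ne_bot hker
  refine ⟨x.1, ?_, ?_, ?_⟩
  · intro hx0
    exact hxne (Subtype.ext hx0)
  · have hdeg : (x.1 : Polynomial ℂ).degree < ((m+1 : ℕ) : WithBot ℕ) := mem_degreeLT.mp x.2
    by_cases hx0 : (x.1 : Polynomial ℂ) = 0
    · simp [hx0]
    · have := (natDegree_lt_iff_degree_lt hx0).mpr hdeg
      omega
  · have : ((L x : degreeLT ℂ m) : Polynomial ℂ) = H x.1 := rfl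
    rw [LinearMap.mem_ker] at hxker
    rw [← this, hxker]
    rfl
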